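/- arXiv:1910.10783 — 3 statements merged into one kernel-verified Lean document; each statement's English description precedes it below -/
import Mathlib

section
/- For any two normalized distributions x, x' on an n×m grid, there exists at least one local flow plan δ such that x' = Δ(x, δ); moreover, the minimum of ‖δ‖₁ over all local flow plans δ satisfying x' = Δ(x, δ) equals W₁(x, x'), the 1-Wasserstein distance between x and x' with the L1 ground metric. -/
/-!
A coupling `P` of `x` and `x'` gives a local flow plan by sending each mass `P p q` along a
monotone lattice path from `p` to `q`, whose length is the `L1` distance; for an optimal coupling
this plan has norm at most `W₁(x, x')`.

Conversely, let `δ` be a local flow plan with `Δ(x, δ) = x'`; reversing the edges that carry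
negative flow, we may take `δ ≥ 0`. Consider pairs of a coupling `P` of `x` with some `z` and a
nonnegative residual flow carrying `z` to `x'`, of total cost at most `‖δ‖₁`; the diagonal
coupling with `δ` is one. If the residual flow leaves some vertex `u` with net outflow, mass must
sit at `u`, and moving `ε` of it in `P` across an edge carrying outflow from `u` costs at most `ε`,
because the ground metric changes by at most one along an edge, while it removes `ε` of residual
flow. So a pair with minimal residual flow, which exists by compactness, has a divergence-free
residual, and its `P` couples `x` with `x'` at cost at most `‖δ‖₁`.
-/

noncomputable section

open Finset MeasureTheory

/-- Grid positions of an `n × m` image (0-based indexing). -/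
abbrev Pos (n m : ℕ) := Fin n × Fin m

/-- A normalized distribution: nonnegative entries summing to one. -/
def IsNormalized {n m : ℕ} (x : Fin n → Fin m → ℝ) : Prop :=
  (∀ i j, 0 ≤ x i j) ∧ (∑ i, ∑ j, x i j) = 1

/-- `Π` is a coupling of `x` and `x'`. -/
def IsCoupling {n m : ℕ} (x x' : Fin n → Fin m → ℝ)
    (P : Pos n m → Pos n m → ℝ) : Prop :=
  (∀ p q, 0 ≤ P p q) ∧ (∀ p, (∑ q, P p q) = x p.1 p.2) ∧
    (∀ q, (∑ p, P p q) = x' q.1 q.2)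

/-- Transport cost of a plan `P` with ground metric `d`. -/
def transportCost {n m : ℕ} (d : Pos n m → Pos n m → ℝ)
    (P : Pos n m → Pos n m → ℝ) : ℝ :=
  ∑ p, ∑ q, P p q * d p q

/-- 1-Wasserstein distance with ground metric `d`. -/
def wassersteinD {n m : ℕ} (d : Pos n m → Pos n m → ℝ)
    (x x' : Fin n → Fin m → ℝ) : ℝ :=
  sInf {c | ∃ P, IsCoupling x x' P ∧ transportCost d P = c}

/-- The `L1` ground metric on pixel positions. -/
def groundL1 {n m : ℕ} (p q : Pos n m) : ℝ :=
  |((p.1 : ℕ) : ℝ) - ((q.1 : ℕ) : ℝ)| + |((p.2 : ℕ) : ℝ) - ((q.2 : ℕ) : ℝ)|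

/-- The `L2` ground metric on pixel positions. -/
def groundL2 {n m : ℕ} (p q : Pos n m) : ℝ :=
  Real.sqrt ((((p.1 : ℕ) : ℝ) - ((q.1 : ℕ) : ℝ)) ^ 2 +
    (((p.2 : ℕ) : ℝ) - ((q.2 : ℕ) : ℝ)) ^ 2)

/-- 1-Wasserstein distance with the `L1` ground metric. -/
def W1 {n m : ℕ} (x x' : Fin n → Fin m → ℝ) : ℝ := wassersteinD groundL1 x x'

/-- Value of the vertical part of a flow plan at integer indices,
zero out of range. -/
def padV {n m : ℕ} (δv : Fin (n - 1) → Fin m → ℝ) (a b : ℤ) : ℝ :=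
  ∑ i : Fin (n - 1), ∑ j : Fin m,
    if ((i : ℕ) : ℤ) = a ∧ ((j : ℕ) : ℤ) = b then δv i j else 0

/-- Value of the horizontal part of a flow plan at integer indices,
zero out of range. -/
def padH {n m : ℕ} (δh : Fin n → Fin (m - 1) → ℝ) (a b : ℤ) : ℝ :=
  ∑ i : Fin n, ∑ j : Fin (m - 1),
    if ((i : ℕ) : ℤ) = a ∧ ((j : ℕ) : ℤ) = b then δh i j else 0

/-- Application `Δ(x, δ)` of a local flow plan `δ = (δv, δh)` to an image `x`. -/
def applyFlow {n m : ℕ} (x : Fin n → Fin m → ℝ) (δv : Fin (n - 1) → Fin m → ℝ)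
    (δh : Fin n → Fin (m - 1) → ℝ) : Fin n → Fin m → ℝ :=
  fun i j =>
    x i j + padV δv (((i : ℕ) : ℤ) - 1) ((j : ℕ) : ℤ) - padV δv ((i : ℕ) : ℤ) ((j : ℕ) : ℤ)
      + padH δh ((i : ℕ) : ℤ) (((j : ℕ) : ℤ) - 1) - padH δh ((i : ℕ) : ℤ) ((j : ℕ) : ℤ)

/-- `L1` norm of a local flow plan. -/
def flowNorm {n m : ℕ} (δv : Fin (n - 1) → Fin m → ℝ)
    (δh : Fin n → Fin (m - 1) → ℝ) : ℝ :=
  (∑ i, ∑ j, |δv i j|) + (∑ i, ∑ j, |δh i j|)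

/-- Lower endpoint of a vertical edge. -/
def vlow {n : ℕ} (i : Fin (n - 1)) : Fin n := ⟨i, by have := i.isLt; omega⟩

/-- Upper endpoint of a vertical edge. -/
def vhigh {n : ℕ} (i : Fin (n - 1)) : Fin n := ⟨i + 1, by have := i.isLt; omega⟩

/-- Left endpoint of a horizontal edge. -/
def hlow {m : ℕ} (j : Fin (m - 1)) : Fin m := ⟨j, by have := j.isLt; omega⟩

/-- Right endpoint of a horizontal edge. -/
def hhigh {m : ℕ} (j : Fin (m - 1)) : Fin m := ⟨j + 1, by have := j.isLt; omega⟩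

/-- The neighbors of a position: positions at `L1` distance exactly one. -/
def nbrs {n m : ℕ} (p : Pos n m) : Finset (Pos n m) :=
  Finset.univ.filter fun q =>
    (((p.1 : ℕ) : ℤ) - ((q.1 : ℕ) : ℤ)).natAbs +
      (((p.2 : ℕ) : ℤ) - ((q.2 : ℕ) : ℤ)).natAbs = 1

/-- Index set for coordinates of local flow plans: `r = (n-1)m + n(m-1)`. -/
abbrev FlowIdx (n m : ℕ) := (Fin (n - 1) × Fin m) ⊕ (Fin n × Fin (m - 1))

/-- Vertical part of a flow-domain vector. -/
def vPart {n m : ℕ} (δ : FlowIdx n m → ℝ) : Fin (n - 1) → Fin m → ℝ :=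
  fun i j => δ (Sum.inl (i, j))

/-- Horizontal part of a flow-domain vector. -/
def hPart {n m : ℕ} (δ : FlowIdx n m → ℝ) : Fin n → Fin (m - 1) → ℝ :=
  fun i j => δ (Sum.inr (i, j))

/-- The Laplace distribution with mean `0` and standard deviation `σ`. -/
def laplaceM (σ : ℝ) : Measure ℝ :=
  volume.withDensity fun t =>
    ENNReal.ofReal ((Real.sqrt 2 * σ)⁻¹ * Real.exp (-(Real.sqrt 2 * |t|) / σ))

/-- Product of i.i.d. Laplace noise over the flow domain. -/
def flowNoise (n m : ℕ) (σ : ℝ) : Measure (FlowIdx n m → ℝ) :=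
  Measure.pi fun _ => laplaceM σ

/-- The Wasserstein-smoothed classifier. -/
def smoothed {n m k : ℕ} (σ : ℝ) (f : (Fin n → Fin m → ℝ) → Fin k → ℝ)
    (x : Fin n → Fin m → ℝ) (i : Fin k) : ℝ :=
  ∫ δ, f (applyFlow x (vPart δ) (hPart δ)) i ∂(flowNoise n m σ)

namespace FlowNetwork

variable {V E : Type*} [DecidableEq V] [Fintype E]

def divergence (s t : E → V) : (E → ℝ) →ₗ[ℝ] V → ℝ where
  toFun δ p := ∑ e, ((if t e = p then δ e else 0) - if s e = p then δ e else 0)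
  map_add' δ δ' := by
    ext p
    simp only [Pi.add_apply, ← sum_add_distrib]
    exact sum_congr rfl fun e _ => by split_ifs <;> ring
  map_smul' c δ := by
    ext p
    simp only [Pi.smul_apply, smul_eq_mul, RingHom.id_apply, mul_sum]
    exact sum_congr rfl fun e _ => by split_ifs <;> ring

variable (s t : E → V)

theorem divergence_apply (δ : E → ℝ) (p : V) :
    divergence s t δ p = ∑ e, ((if t e = p then δ e else 0) - if s e = p then δ e else 0) :=
  rfl

@[fun_prop]
theorem continuous_divergence : Continuous (divergence s t) :=
  (divergence s t).continuous_of_finiteDimensional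

theorem divergence_single [DecidableEq E] (e : E) (c : ℝ) :
    divergence s t (Pi.single e c) = Pi.single (t e) c - Pi.single (s e) c := by
  ext p
  rw [divergence_apply, sum_eq_single e (fun b _ hb => by simp [hb]) (by simp)]
  simp [Pi.single_apply, eq_comm]

theorem divergence_abs_reorient (δ : E → ℝ) :
    divergence (fun e => if 0 ≤ δ e then s e else t e) (fun e => if 0 ≤ δ e then t e else s e)
      (fun e => |δ e|) = divergence s t δ := by
  ext p
  refine sum_congr rfl fun e _ => ?_
  by_cases h : 0 ≤ δ e
  · simp only [h, if_true, abs_of_nonneg h]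
  · simp only [h, if_false, abs_of_neg (not_le.mp h)]
    split_ifs <;> ring

theorem exists_source_eq_of_divergence_neg {δ : E → ℝ} (hδ : 0 ≤ δ) {u : V}
    (hu : divergence s t δ u < 0) : ∃ e, s e = u ∧ 0 < δ e := by
  rw [divergence_apply] at hu
  obtain ⟨e, -, he⟩ := exists_lt_of_sum_lt (hu.trans_eq sum_const_zero.symm)
  have : 0 ≤ δ e := hδ e
  by_cases hs : s e = u
  · simp only [hs, if_true] at he
    exact ⟨e, hs, by split_ifs at he <;> linarith⟩
  · simp only [hs, if_false] at he
    split_ifs at he <;> linarith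

omit [DecidableEq V] in
theorem sum_abs_add_single_le [DecidableEq E] (f : E → ℝ) (e : E) (c : ℝ) :
    ∑ e', |(f + Pi.single e c : E → ℝ) e'| ≤ ∑ e', |f e'| + |c| := by
  calc ∑ e', |(f + Pi.single e c : E → ℝ) e'|
        ≤ ∑ e', (|f e'| + |(Pi.single e c : E → ℝ) e'|) := sum_le_sum fun e' _ => abs_add_le _ _
    _ = ∑ e', |f e'| + |c| := by
      rw [sum_add_distrib, add_right_inj, sum_eq_single e (fun b _ hb => by simp [hb]) (by simp)]
      simp

def HasEdgeDescent (D : V → V → ℕ) : Prop :=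
  ∀ p q, p ≠ q → ∃ e, s e = p ∧ D (t e) q < D p q ∨ t e = p ∧ D (s e) q < D p q

theorem exists_path_flow {D : V → V → ℕ} (hD : HasEdgeDescent s t D) (p q : V) :
    ∃ f : E → ℝ, divergence s t f = Pi.single q 1 - Pi.single p 1 ∧ ∑ e, |f e| ≤ D p q := by
  classical
  induction hk : D p q using Nat.strong_induction_on generalizing p with
  | _ k ih =>
  by_cases hpq : p = q
  · exact ⟨0, by simp [hpq], by simp⟩
  obtain ⟨e, ⟨hs, hlt⟩ | ⟨ht, hlt⟩⟩ := hD p q hpq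
  · obtain ⟨f, hf, hfD⟩ := ih _ (hk ▸ hlt) (t e) rfl
    refine ⟨f + Pi.single e 1, by rw [map_add, hf, divergence_single, hs]; abel, ?_⟩
    have : (D (t e) q : ℝ) + 1 ≤ k := by exact_mod_cast hk ▸ hlt
    linarith [sum_abs_add_single_le f e 1, abs_one (α := ℝ)]
  · obtain ⟨f, hf, hfD⟩ := ih _ (hk ▸ hlt) (s e) rfl
    refine ⟨f + Pi.single e (-1), ?_, ?_⟩
    · rw [map_add, hf, divergence_single, ht, Pi.single_neg, Pi.single_neg]; abel
    have : (D (s e) q : ℝ) + 1 ≤ k := by exact_mod_cast hk ▸ hlt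
    linarith [sum_abs_add_single_le f e (-1), abs_neg (1 : ℝ), abs_one (α := ℝ)]

variable [Fintype V]

theorem sum_divergence (δ : E → ℝ) : ∑ p, divergence s t δ p = 0 := by
  simp only [divergence_apply]
  rw [sum_comm]
  simp [sum_sub_distrib]

theorem exists_flow_of_coupling {D : V → V → ℕ} (hD : HasEdgeDescent s t D) {x x' : V → ℝ}
    {P : V → V → ℝ} (hP : ∀ p q, 0 ≤ P p q) (hrow : ∀ p, ∑ q, P p q = x p)
    (hcol : ∀ q, ∑ p, P p q = x' q) :
    ∃ δ : E → ℝ, x' = x + divergence s t δ ∧ ∑ e, |δ e| ≤ ∑ p, ∑ q, P p q * D p q := by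
  choose f hf hfD using exists_path_flow s t hD
  refine ⟨∑ p, ∑ q, P p q • f p q, ?_, ?_⟩
  · ext r
    have hin : ∑ p, ∑ q, P p q * (Pi.single q 1 : V → ℝ) r = x' r := by
      simp [Pi.single_apply, hcol]
    have hout : ∑ p, ∑ q, P p q * (Pi.single p 1 : V → ℝ) r = x r := by
      simp_rw [← sum_mul, hrow]
      simp [Pi.single_apply]
    simp only [map_sum, map_smul, hf, Pi.add_apply, Finset.sum_apply, Pi.smul_apply,
      Pi.sub_apply, smul_eq_mul, mul_sub, sum_sub_distrib, hin, hout]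
    ring
  · simp only [Finset.sum_apply, Pi.smul_apply, smul_eq_mul]
    calc ∑ e, |∑ p, ∑ q, P p q * f p q e|
        ≤ ∑ e, ∑ p, ∑ q, P p q * |f p q e| := by
          refine sum_le_sum fun e _ => (abs_sum_le_sum_abs _ _).trans <| sum_le_sum fun p _ =>
            (abs_sum_le_sum_abs _ _).trans <| sum_le_sum fun q _ => ?_
          rw [abs_mul, abs_of_nonneg (hP p q)]
      _ = ∑ p, ∑ q, P p q * ∑ e, |f p q e| := by
          simp only [mul_sum]
          rw [sum_comm]
          exact sum_congr rfl fun p _ => sum_comm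
      _ ≤ ∑ p, ∑ q, P p q * D p q :=
          sum_le_sum fun p _ => sum_le_sum fun q _ => mul_le_mul_of_nonneg_left (hfD p q) (hP p q)

omit [Fintype E] in
theorem exists_shift_column_mass (d : V → V → ℝ) {P : V → V → ℝ} (hP : ∀ p q, 0 ≤ P p q)
    {u v : V} (hd : ∀ p, d p v ≤ d p u + 1) {ε : ℝ} (hε : 0 ≤ ε) (hεu : ε ≤ ∑ p, P p u) :
    ∃ Q : V → V → ℝ, (∀ p q, 0 ≤ Q p q) ∧ (∀ p, ∑ q, Q p q = ∑ q, P p q) ∧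
      (fun q => ∑ p, Q p q) = (fun q => ∑ p, P p q) + Pi.single v ε - Pi.single u ε ∧
      ∑ p, ∑ q, Q p q * d p q ≤ ∑ p, ∑ q, P p q * d p q + ε := by
  set c := ε / ∑ p, P p u
  have hc0 : 0 ≤ c := div_nonneg hε (hε.trans hεu)
  have hc1 : c ≤ 1 := div_le_one_of_le₀ hεu (hε.trans hεu)
  have hcu : c * ∑ p, P p u = ε := by
    rcases (hε.trans hεu).eq_or_lt with h | h
    · rw [← h, mul_zero]
      linarith
    · exact div_mul_cancel₀ ε h.ne'
  -- move the fraction `c` of column `u` to column `v`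
  refine ⟨fun p q => P p q + c * P p u * ((if q = v then 1 else 0) - if q = u then 1 else 0),
    fun p q => ?_, fun p => ?_, ?_, ?_⟩
  · have := hP p q
    have := hP p u
    dsimp only
    split_ifs <;> subst_vars <;> nlinarith
  · simp [mul_sub, sum_add_distrib, sum_sub_distrib]
  · ext q
    simp only [sum_add_distrib, ← sum_mul, ← mul_sum, hcu, Pi.add_apply, Pi.sub_apply,
      Pi.single_apply]
    split_ifs <;> ring
  · have hcost : ∑ p, ∑ q,
        (P p q + c * P p u * ((if q = v then 1 else 0) - if q = u then 1 else 0)) * d p q =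
          ∑ p, ∑ q, P p q * d p q + ∑ p, c * P p u * (d p v - d p u) := by
      simp [add_mul, sub_mul, sum_add_distrib, sum_sub_distrib, mul_sub, mul_assoc]
    rw [hcost, ← hcu, mul_sum]
    refine add_le_add le_rfl (sum_le_sum fun p _ => ?_)
    exact mul_le_of_le_one_right (mul_nonneg hc0 (hP p u)) (by linarith [hd p])

/-- `S.1` transports `x` to its column marginal, and the residual flow `S.2 ≥ 0` carries that
marginal on to `x'`; `B` bounds the combined cost as well as the residual flow alone. -/
def IsPartialTransport (d : V → V → ℝ) (x x' : V → ℝ) (B : ℝ) (S : (V → V → ℝ) × (E → ℝ)) :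
    Prop :=
  0 ≤ S.1 ∧ (fun p => ∑ q, S.1 p q) = x ∧ 0 ≤ S.2 ∧
    x' = (fun q => ∑ p, S.1 p q) + divergence s t S.2 ∧
    ∑ p, ∑ q, S.1 p q * d p q + ∑ e, S.2 e ≤ B ∧ ∑ e, S.2 e ≤ B

theorem isCompact_setOf_isPartialTransport (d : V → V → ℝ) (x x' : V → ℝ) (B : ℝ) :
    IsCompact {S | IsPartialTransport s t d x x' B S} := by
  refine (isCompact_Icc (a := (0, 0)) (b := (fun p _ => x p, fun _ => B))).of_isClosed_subset
    ?_ ?_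
  · simp only [IsPartialTransport, Set.ofPred_and]
    refine (isClosed_le continuous_const continuous_fst).inter <|
      (isClosed_eq (by fun_prop) continuous_const).inter <|
      (isClosed_le continuous_const continuous_snd).inter <|
      (isClosed_eq continuous_const (by fun_prop)).inter <|
      (isClosed_le (by fun_prop) continuous_const).inter
      (isClosed_le (by fun_prop) continuous_const)
  · rintro ⟨P, δ⟩ ⟨hP, hrow, hδ, -, -, hB⟩
    refine ⟨⟨hP, hδ⟩, fun p q => ?_, fun e => ?_⟩
    · rw [← hrow]
      exact single_le_sum (fun q _ => hP p q) (mem_univ q)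
    · exact (single_le_sum (fun e _ => hδ e) (mem_univ e)).trans hB

theorem IsPartialTransport.exists_residual_lt {d : V → V → ℝ}
    (hd : ∀ e p, d p (t e) ≤ d p (s e) + 1) {x x' : V → ℝ} (hx' : 0 ≤ x') {B : ℝ}
    {S : (V → V → ℝ) × (E → ℝ)} (hS : IsPartialTransport s t d x x' B S) {u : V}
    (hu : divergence s t S.2 u < 0) :
    ∃ S', IsPartialTransport s t d x x' B S' ∧ ∑ e, S'.2 e < ∑ e, S.2 e := by
  classical
  obtain ⟨hP, hrow, hδ, hx'eq, hcost, hB⟩ := hS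
  obtain ⟨e, rfl, he⟩ := exists_source_eq_of_divergence_neg s t hδ hu
  have hmass : 0 < ∑ p, S.1 p (s e) := by
    have h0 : 0 ≤ x' (s e) := hx' (s e)
    have := congrFun hx'eq (s e)
    simp only [Pi.add_apply] at this
    linarith
  set ε := min (S.2 e) (∑ p, S.1 p (s e))
  have hε : 0 < ε := lt_min he hmass
  obtain ⟨Q, hQ, hQrow, hQcol, hQcost⟩ :=
    exists_shift_column_mass d hP (hd e) hε.le (min_le_right _ _)
  have hsum : ∑ e', (S.2 - Pi.single e ε : E → ℝ) e' = ∑ e', S.2 e' - ε := by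
    simp [sum_sub_distrib]
  refine ⟨(Q, S.2 - Pi.single e ε), ⟨fun p q => hQ p q, hrow ▸ funext hQrow, fun e' => ?_, ?_,
    ?_, ?_⟩, ?_⟩
  · by_cases h : e' = e
    · simpa only [h, Pi.zero_apply, Pi.sub_apply, Pi.single_eq_same, sub_nonneg] using
        min_le_left (S.2 e) _
    · simpa [h] using hδ e'
  · rw [hQcol, map_sub, divergence_single, hx'eq]
    abel
  all_goals rw [hsum]; linarith

theorem exists_coupling_cost_le_of_nonneg (d : V → V → ℝ) (hd0 : ∀ p, d p p = 0)
    (hd : ∀ e p, d p (t e) ≤ d p (s e) + 1) {x x' : V → ℝ} (hx : 0 ≤ x) (hx' : 0 ≤ x')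
    {δ : E → ℝ} (hδ : 0 ≤ δ) (h : x' = x + divergence s t δ) :
    ∃ P : V → V → ℝ, (∀ p q, 0 ≤ P p q) ∧ (∀ p, ∑ q, P p q = x p) ∧
      (∀ q, ∑ p, P p q = x' q) ∧ ∑ p, ∑ q, P p q * d p q ≤ ∑ e, δ e := by
  have hdiag :
      IsPartialTransport s t d x x' (∑ e, δ e) (fun p q => if p = q then x p else 0, δ) := by
    refine ⟨fun p q => ?_, ?_, hδ, ?_, ?_, le_rfl⟩
    · dsimp only
      split_ifs
      exacts [hx p, le_rfl]
    · ext p; simp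
    · ext q; simp [h]
    · simp [hd0]
  obtain ⟨S, hS, hmin⟩ := (isCompact_setOf_isPartialTransport s t d x x' _).exists_isMinOn
    ⟨_, hdiag⟩ (f := fun S => ∑ e, S.2 e) (by fun_prop)
  have hdiv : divergence s t S.2 = 0 := by
    by_contra hne
    obtain ⟨u, hu⟩ : ∃ u, divergence s t S.2 u < 0 := by
      by_contra! hnn
      exact hne <| funext fun u =>
        (sum_eq_zero_iff_of_nonneg fun u _ => hnn u).mp (sum_divergence s t S.2) u (mem_univ u)
    obtain ⟨S', hS', hlt⟩ := hS.exists_residual_lt s t hd hx' hu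
    exact (hmin hS').not_gt hlt
  obtain ⟨hP, hrow, hδS, hx'eq, hcost, -⟩ := hS
  refine ⟨S.1, hP, congrFun hrow, fun q => by simp [hx'eq, hdiv], ?_⟩
  linarith [sum_nonneg fun e (_ : e ∈ univ) => hδS e]

theorem exists_coupling_cost_le_of_divergence (d : V → V → ℝ) (hd0 : ∀ p, d p p = 0)
    (hd : ∀ e p, |d p (t e) - d p (s e)| ≤ 1) {x x' : V → ℝ} (hx : 0 ≤ x) (hx' : 0 ≤ x')
    {δ : E → ℝ} (h : x' = x + divergence s t δ) :
    ∃ P : V → V → ℝ, (∀ p q, 0 ≤ P p q) ∧ (∀ p, ∑ q, P p q = x p) ∧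
      (∀ q, ∑ p, P p q = x' q) ∧ ∑ p, ∑ q, P p q * d p q ≤ ∑ e, |δ e| := by
  rw [← divergence_abs_reorient] at h
  refine exists_coupling_cost_le_of_nonneg _ _ d hd0 (fun e p => ?_) hx hx'
    (fun e => abs_nonneg (δ e)) h
  have := abs_le.mp (hd e p)
  split_ifs <;> linarith

end FlowNetwork

section Grid

open FlowNetwork

variable {n m : ℕ}

def gridSrc : FlowIdx n m → Pos n m :=
  Sum.elim (fun e => (vlow e.1, e.2)) (fun e => (e.1, hlow e.2))

def gridTgt : FlowIdx n m → Pos n m :=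
  Sum.elim (fun e => (vhigh e.1, e.2)) (fun e => (e.1, hhigh e.2))

theorem uncurry_applyFlow (x : Fin n → Fin m → ℝ) (δ : FlowIdx n m → ℝ) :
    Function.uncurry (applyFlow x (vPart δ) (hPart δ)) =
      Function.uncurry x + divergence gridSrc gridTgt δ := by
  ext ⟨i, j⟩
  have hvh : ∀ (a : Fin (n - 1)) (b : Fin m),
      (vhigh a, b) = (i, j) ↔ ((a : ℕ) : ℤ) = (i : ℤ) - 1 ∧ ((b : ℕ) : ℤ) = j := by
    intro a b; simp only [Prod.ext_iff, Fin.ext_iff, vhigh]; omega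
  have hvl : ∀ (a : Fin (n - 1)) (b : Fin m),
      (vlow a, b) = (i, j) ↔ ((a : ℕ) : ℤ) = i ∧ ((b : ℕ) : ℤ) = j := by
    intro a b; simp only [Prod.ext_iff, Fin.ext_iff, vlow]; omega
  have hhh : ∀ (a : Fin n) (b : Fin (m - 1)),
      (a, hhigh b) = (i, j) ↔ ((a : ℕ) : ℤ) = i ∧ ((b : ℕ) : ℤ) = (j : ℤ) - 1 := by
    intro a b; simp only [Prod.ext_iff, Fin.ext_iff, hhigh]; omega
  have hhl : ∀ (a : Fin n) (b : Fin (m - 1)),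
      (a, hlow b) = (i, j) ↔ ((a : ℕ) : ℤ) = i ∧ ((b : ℕ) : ℤ) = j := by
    intro a b; simp only [Prod.ext_iff, Fin.ext_iff, hlow]; omega
  simp only [Function.uncurry_apply_pair, Pi.add_apply, divergence_apply, Fintype.sum_sum_type,
    Fintype.sum_prod_type, gridSrc, gridTgt, Sum.elim_inl, Sum.elim_inr, hvh, hvl, hhh, hhl,
    applyFlow, padV, padH, vPart, hPart, sum_sub_distrib]
  ring

theorem flowNorm_vPart_hPart (δ : FlowIdx n m → ℝ) :
    flowNorm (vPart δ) (hPart δ) = ∑ e, |δ e| := by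
  simp [flowNorm, vPart, hPart, Fintype.sum_sum_type, Fintype.sum_prod_type]

theorem applyFlow_eq_iff {x x' : Fin n → Fin m → ℝ} {δ : FlowIdx n m → ℝ} :
    applyFlow x (vPart δ) (hPart δ) = x' ↔
      Function.uncurry x' = Function.uncurry x + divergence gridSrc gridTgt δ := by
  rw [← uncurry_applyFlow, Function.uncurry_injective.eq_iff, eq_comm]

def gridDist (p q : Pos n m) : ℕ :=
  (((p.1 : ℕ) : ℤ) - (q.1 : ℕ)).natAbs + (((p.2 : ℕ) : ℤ) - (q.2 : ℕ)).natAbs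

theorem groundL1_eq_gridDist (p q : Pos n m) : groundL1 p q = gridDist p q := by
  simp [groundL1, gridDist, Nat.cast_natAbs]

theorem groundL1_self (p : Pos n m) : groundL1 p p = 0 := by
  simp [groundL1]

theorem abs_groundL1_gridTgt_sub_gridSrc_le (e : FlowIdx n m) (p : Pos n m) :
    |groundL1 p (gridTgt e) - groundL1 p (gridSrc e)| ≤ 1 := by
  have h : |((gridDist p (gridTgt e) : ℤ) - gridDist p (gridSrc e))| ≤ 1 := by
    rw [abs_le]
    rcases e with ⟨a, b⟩ | ⟨a, b⟩ <;>
    · simp only [gridDist, gridSrc, gridTgt, Sum.elim_inl, Sum.elim_inr, vlow, vhigh, hlow, hhigh]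
      omega
  rw [groundL1_eq_gridDist, groundL1_eq_gridDist]
  exact_mod_cast h

theorem hasEdgeDescent_gridDist : HasEdgeDescent gridSrc gridTgt (gridDist (n := n) (m := m)) := by
  intro p q hpq
  obtain ⟨⟨i, hi⟩, ⟨j, hj⟩⟩ := p
  obtain ⟨⟨k, hk⟩, ⟨l, hl⟩⟩ := q
  rcases lt_trichotomy i k with hik | rfl | hik
  · refine ⟨.inl (⟨i, by omega⟩, ⟨j, hj⟩), .inl ⟨rfl, ?_⟩⟩
    simp only [gridDist, gridTgt, Sum.elim_inl, vhigh]; omega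
  · rcases lt_trichotomy j l with hjl | rfl | hjl
    · refine ⟨.inr (⟨i, hi⟩, ⟨j, by omega⟩), .inl ⟨rfl, ?_⟩⟩
      simp only [gridDist, gridTgt, Sum.elim_inr, hhigh]; omega
    · exact absurd rfl hpq
    · refine ⟨.inr (⟨i, hi⟩, ⟨j - 1, by omega⟩), .inr ⟨?_, ?_⟩⟩
      · simp only [gridTgt, Sum.elim_inr, hhigh, Prod.mk.injEq, Fin.mk.injEq, true_and]; omega
      · simp only [gridDist, gridSrc, Sum.elim_inr, hlow]; omega
  · refine ⟨.inl (⟨i - 1, by omega⟩, ⟨j, hj⟩), .inr ⟨?_, ?_⟩⟩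
    · simp only [gridTgt, Sum.elim_inl, vhigh, Prod.mk.injEq, Fin.mk.injEq, and_true]; omega
    · simp only [gridDist, gridSrc, Sum.elim_inl, vlow]; omega

theorem exists_flow_of_isCoupling {x x' : Fin n → Fin m → ℝ} {P : Pos n m → Pos n m → ℝ}
    (hP : IsCoupling x x' P) :
    ∃ δ : FlowIdx n m → ℝ, applyFlow x (vPart δ) (hPart δ) = x' ∧
      flowNorm (vPart δ) (hPart δ) ≤ transportCost groundL1 P := by
  obtain ⟨δ, hδ, hnorm⟩ :=
    exists_flow_of_coupling gridSrc gridTgt hasEdgeDescent_gridDist hP.1 hP.2.1 hP.2.2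
  refine ⟨δ, applyFlow_eq_iff.mpr hδ, ?_⟩
  simpa only [flowNorm_vPart_hPart, transportCost, groundL1_eq_gridDist] using hnorm

theorem W1_le_flowNorm {x x' : Fin n → Fin m → ℝ} (hx : ∀ i j, 0 ≤ x i j)
    (hx' : ∀ i j, 0 ≤ x' i j) {δv : Fin (n - 1) → Fin m → ℝ} {δh : Fin n → Fin (m - 1) → ℝ}
    (h : applyFlow x δv δh = x') : W1 x x' ≤ flowNorm δv δh := by
  let δ : FlowIdx n m → ℝ := Sum.elim (fun e => δv e.1 e.2) (fun e => δh e.1 e.2)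
  obtain ⟨P, hP0, hrow, hcol, hcost⟩ :=
    exists_coupling_cost_le_of_divergence gridSrc gridTgt groundL1 groundL1_self
      abs_groundL1_gridTgt_sub_gridSrc_le (fun p => hx p.1 p.2) (fun p => hx' p.1 p.2)
      ((applyFlow_eq_iff (δ := δ)).mp h)
  have hbdd : BddBelow {c | ∃ P, IsCoupling x x' P ∧ transportCost groundL1 P = c} := by
    refine ⟨0, ?_⟩
    rintro _ ⟨P, hP, rfl⟩
    exact sum_nonneg fun p _ => sum_nonneg fun q _ =>
      mul_nonneg (hP.1 p q) (add_nonneg (abs_nonneg _) (abs_nonneg _))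
  calc W1 x x' ≤ transportCost groundL1 P := csInf_le hbdd ⟨P, ⟨hP0, hrow, hcol⟩, rfl⟩
    _ ≤ flowNorm (vPart δ) (hPart δ) := (flowNorm_vPart_hPart δ).symm ▸ hcost

theorem isCompact_setOf_isCoupling (x x' : Fin n → Fin m → ℝ) :
    IsCompact {P | IsCoupling x x' P} := by
  refine (isCompact_Icc (a := 0) (b := fun p _ => x p.1 p.2)).of_isClosed_subset ?_ ?_
  · have : {P | IsCoupling x x' P} = Set.Ici 0 ∩
        {P | (fun p => ∑ q, P p q) = Function.uncurry x} ∩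
        {P | (fun q => ∑ p, P p q) = Function.uncurry x'} := by
      ext P
      simp [IsCoupling, funext_iff, Pi.le_def, and_assoc]
    rw [this]
    exact (isClosed_Ici.inter (isClosed_eq (by fun_prop) continuous_const)).inter
      (isClosed_eq (by fun_prop) continuous_const)
  · rintro P ⟨hP, hrow, -⟩
    refine ⟨fun p q => hP p q, fun p q => ?_⟩
    show P p q ≤ x p.1 p.2
    rw [← hrow p]
    exact single_le_sum (fun q _ => hP p q) (mem_univ q)

theorem exists_isCoupling_transportCost_eq_wassersteinD (d : Pos n m → Pos n m → ℝ)
    {x x' : Fin n → Fin m → ℝ} (hx : IsNormalized x) (hx' : IsNormalized x') :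
    ∃ P, IsCoupling x x' P ∧ transportCost d P = wassersteinD d x x' := by
  have hprod : IsCoupling x x' fun p q => x p.1 p.2 * x' q.1 q.2 := by
    refine ⟨fun p q => mul_nonneg (hx.1 _ _) (hx'.1 _ _), fun p => ?_, fun q => ?_⟩
    · rw [← mul_sum, Fintype.sum_prod_type, hx'.2, mul_one]
    · rw [← sum_mul, Fintype.sum_prod_type, hx.2, one_mul]
  have hcont : Continuous (transportCost d) := by
    unfold transportCost
    fun_prop
  obtain ⟨_, ⟨P, hP, rfl⟩, hleast⟩ := ((isCompact_setOf_isCoupling x x').image hcont).exists_isLeast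
    ⟨_, Set.mem_image_of_mem _ hprod⟩
  have hmin : IsLeast (transportCost d '' {P | IsCoupling x x' P}) (transportCost d P) :=
    ⟨⟨P, hP, rfl⟩, hleast⟩
  exact ⟨P, hP, hmin.csInf_eq.symm⟩

end Grid

/-- For normalized distributions `x, x'` there exists a local
flow plan `δ` with `x' = Δ(x, δ)`, and the minimum of `‖δ‖₁` over all such
`δ` equals the 1-Wasserstein distance `W₁(x, x')` with `L1` ground metric. -/
theorem flow_min_eq_wasserstein {n m : ℕ} (x x' : Fin n → Fin m → ℝ)
    (hx : IsNormalized x) (hx' : IsNormalized x') :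
    (∃ (δv : Fin (n - 1) → Fin m → ℝ) (δh : Fin n → Fin (m - 1) → ℝ),
        applyFlow x δv δh = x') ∧
      IsLeast {c | ∃ (δv : Fin (n - 1) → Fin m → ℝ) (δh : Fin n → Fin (m - 1) → ℝ),
        applyFlow x δv δh = x' ∧ flowNorm δv δh = c} (W1 x x') := by
  obtain ⟨P, hP, hcost⟩ := exists_isCoupling_transportCost_eq_wassersteinD groundL1 hx hx'
  obtain ⟨δ, hδ, hnorm⟩ := exists_flow_of_isCoupling hP
  have hlower : ∀ δv δh, applyFlow x δv δh = x' → W1 x x' ≤ flowNorm δv δh :=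
    fun _ _ => W1_le_flowNorm hx.1 hx'.1
  refine ⟨⟨_, _, hδ⟩, ⟨_, _, hδ, (hnorm.trans hcost.le).antisymm (hlower _ _ hδ)⟩, ?_⟩
  rintro c ⟨δv, δh, h, rfl⟩
  exact hlower δv δh h
end
end

section
/- Let v ∈ ℝ^d, let h : ℝ^d → [0,1]^k be measurable, let ε be a random vector of d i.i.d. Laplace(0, σ) coordinates, and suppose the class i satisfies E[h_i(v + ε)] ≥ e^{2√2·ρ/σ} · max_{i' ≠ i} E[h_{i'}(v + ε)]. Then for every ṽ ∈ ℝ^d with ‖v − ṽ‖₁ ≤ ρ, one has E[h_i(ṽ + ε)] ≥ max_{i' ≠ i} E[h_{i'}(ṽ + ε)]. -/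
noncomputable section

open Finset MeasureTheory

/-- Product of `d` i.i.d. Laplace distributions on `ℝ^d`. -/
def laplacePi (d : ℕ) (σ : ℝ) : Measure (Fin d → ℝ) :=
  Measure.pi fun _ => laplaceM σ

/-!
The Laplace density `p` satisfies `p (t - a) ≥ exp (-√2 |a| / σ) * p t`, so translating the noise
by `c` changes every smoothed score by at most the factor `exp (√2 ‖c‖₁ / σ)`, in either
direction. Passing from `ṽ` to `v` and back therefore costs at most `exp (2 √2 ρ / σ)`, which is
exactly the margin assumed at `v`.
-/

open scoped ENNReal

namespace MeasureTheory

variable {α : Type*} [MeasurableSpace α]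

theorem lintegral_fin_nat_prod_eq_prod {n : ℕ} {μ : Fin n → Measure α} [∀ i, SigmaFinite (μ i)]
    {f : Fin n → α → ℝ≥0∞} (hf : ∀ i, Measurable (f i)) :
    ∫⁻ x, ∏ i, f i (x i) ∂Measure.pi μ = ∏ i, ∫⁻ x, f i x ∂μ i := by
  induction n with
  | zero => simp
  | succ n ih =>
    calc
      _ = ∫⁻ x : α × (Fin n → α), f 0 x.1 * ∏ i : Fin n, f i.succ (x.2 i)
            ∂(μ 0).prod (Measure.pi fun i ↦ μ i.succ) := by
        rw [← (measurePreserving_piFinSuccAbove μ 0).symm.lintegral_comp_emb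
          (MeasurableEquiv.measurableEmbedding _)]
        simp_rw [MeasurableEquiv.piFinSuccAbove_symm_apply, Fin.insertNthEquiv,
          Fin.prod_univ_succ, Fin.insertNth_zero, Equiv.coe_fn_mk, Fin.cons_succ,
          Fin.zero_succAbove, cast_eq, Fin.cons_zero]
      _ = (∫⁻ x, f 0 x ∂μ 0) * ∏ i : Fin n, ∫⁻ x, f i.succ x ∂μ i.succ := by
        rw [← ih fun i ↦ hf i.succ]
        exact lintegral_prod_mul (hf 0).aemeasurable (Finset.measurable_prod _
          fun (i : Fin n) _ ↦ (hf i.succ).comp (measurable_pi_apply i)).aemeasurable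
      _ = ∏ i, ∫⁻ x, f i x ∂μ i := (Fin.prod_univ_succ (fun i ↦ ∫⁻ x, f i x ∂μ i)).symm

theorem Measure.pi_withDensity {n : ℕ} {μ : Fin n → Measure α} [∀ i, SigmaFinite (μ i)]
    {f : Fin n → α → ℝ≥0∞} (hf : ∀ i, Measurable (f i))
    [∀ i, SigmaFinite ((μ i).withDensity (f i))] :
    Measure.pi (fun i ↦ (μ i).withDensity (f i))
      = (Measure.pi μ).withDensity fun x ↦ ∏ i, f i (x i) := by
  refine Measure.pi_eq fun s hs ↦ ?_
  rw [withDensity_apply _ (.univ_pi hs), Measure.restrict_pi_pi,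
    lintegral_fin_nat_prod_eq_prod hf]
  simp_rw [withDensity_apply _ (hs _)]

end MeasureTheory

open Real

def laplaceDensity (σ t : ℝ) : ℝ := (√2 * σ)⁻¹ * exp (-(√2 * |t|) / σ)

lemma laplaceDensity_nonneg {σ : ℝ} (hσ : 0 < σ) (t : ℝ) : 0 ≤ laplaceDensity σ t := by
  unfold laplaceDensity; positivity

lemma exp_mul_laplaceDensity_le {σ : ℝ} (hσ : 0 < σ) (a t : ℝ) :
    exp (-(√2 * |a|) / σ) * laplaceDensity σ t ≤ laplaceDensity σ (t - a) := by
  unfold laplaceDensity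
  calc exp (-(√2 * |a|) / σ) * ((√2 * σ)⁻¹ * exp (-(√2 * |t|) / σ))
      = (√2 * σ)⁻¹ * exp (-(√2 * (|t| + |a|)) / σ) := by
        rw [mul_left_comm, ← exp_add]; ring_nf
    _ ≤ (√2 * σ)⁻¹ * exp (-(√2 * |t - a|) / σ) := by
        gcongr; exact abs_sub t a

lemma exp_mul_prod_laplaceDensity_le {σ : ℝ} (hσ : 0 < σ) {d : ℕ} (c x : Fin d → ℝ) :
    exp (-(√2 * ∑ j, |c j|) / σ) * ∏ j, laplaceDensity σ (x j)
      ≤ ∏ j, laplaceDensity σ (x j - c j) := by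
  have hsplit : exp (-(√2 * ∑ j, |c j|) / σ) = ∏ j, exp (-(√2 * |c j|) / σ) := by
    rw [← exp_sum, Finset.mul_sum, ← Finset.sum_neg_distrib, Finset.sum_div]
  rw [hsplit, ← Finset.prod_mul_distrib]
  exact Finset.prod_le_prod (fun j _ ↦ by have := laplaceDensity_nonneg hσ (x j); positivity)
    fun j _ ↦ exp_mul_laplaceDensity_le hσ (c j) (x j)

lemma laplacePi_eq_withDensity {σ : ℝ} (hσ : 0 < σ) (d : ℕ) :
    laplacePi d σ
      = volume.withDensity fun x ↦ ENNReal.ofReal (∏ j, laplaceDensity σ (x j)) := by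
  have hmeas : Measurable (laplaceDensity σ) := by unfold laplaceDensity; fun_prop
  simp_rw [ENNReal.ofReal_prod_of_nonneg fun j _ ↦ laplaceDensity_nonneg hσ _]
  exact Measure.pi_withDensity fun _ ↦ hmeas.ennreal_ofReal

lemma exp_mul_lintegral_laplacePi_le {σ : ℝ} (hσ : 0 < σ) {d : ℕ} (c : Fin d → ℝ)
    {g : (Fin d → ℝ) → ℝ≥0∞} (hg : Measurable g) :
    ENNReal.ofReal (exp (-(√2 * ∑ j, |c j|) / σ)) * ∫⁻ x, g x ∂laplacePi d σ
      ≤ ∫⁻ x, g (c + x) ∂laplacePi d σ := by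
  set P : (Fin d → ℝ) → ℝ≥0∞ := fun x ↦ ENNReal.ofReal (∏ j, laplaceDensity σ (x j))
  have hP : Measurable P := by
    simp only [P, laplaceDensity]; fun_prop
  have htranslate : ∫⁻ x, P x * g (c + x) = ∫⁻ y, P (y - c) * g y := by
    simpa using lintegral_add_left_eq_self (fun y ↦ P (y - c) * g y) c
  rw [laplacePi_eq_withDensity hσ, lintegral_withDensity_eq_lintegral_mul _ hP hg,
    lintegral_withDensity_eq_lintegral_mul _ hP (by fun_prop), ← lintegral_const_mul _ (hP.mul hg)]
  simp only [Pi.mul_apply]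
  rw [htranslate]
  refine lintegral_mono fun y ↦ ?_
  rw [← mul_assoc, ← ENNReal.ofReal_mul (exp_pos _).le]
  gcongr
  exact ENNReal.ofReal_le_ofReal (exp_mul_prod_laplaceDensity_le hσ c y)

lemma exp_mul_integral_laplacePi_le {σ : ℝ} (hσ : 0 < σ) {d : ℕ} (c : Fin d → ℝ)
    {g : (Fin d → ℝ) → ℝ} (hg : Measurable g) (hg0 : 0 ≤ g) :
    exp (-(√2 * ∑ j, |c j|) / σ) * ∫ x, g x ∂laplacePi d σ
      ≤ ∫ x, g (c + x) ∂laplacePi d σ := by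
  set K := ENNReal.ofReal (exp (-(√2 * ∑ j, |c j|) / σ))
  set A := ∫⁻ x, ENNReal.ofReal (g x) ∂laplacePi d σ
  set B := ∫⁻ x, ENNReal.ofReal (g (c + x)) ∂laplacePi d σ
  have hAB : K * A ≤ B := exp_mul_lintegral_laplacePi_le hσ c hg.ennreal_ofReal
  have hBA : K * B ≤ A := by
    simpa using exp_mul_lintegral_laplacePi_le hσ (-c) (g := fun x ↦ ENNReal.ofReal (g (c + x)))
      (by fun_prop)
  rw [integral_eq_lintegral_of_nonneg_ae (.of_forall hg0) hg.aestronglyMeasurable,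
    integral_eq_lintegral_of_nonneg_ae (f := fun x ↦ g (c + x)) (.of_forall fun x ↦ hg0 (c + x))
      (hg.comp (measurable_const_add c)).aestronglyMeasurable]
  change exp _ * A.toReal ≤ B.toReal
  rw [← ENNReal.toReal_ofReal (exp_pos _).le, ← ENNReal.toReal_mul]
  -- No integrability is needed: if `B = ⊤` then `A = ⊤` by `hBA`, and both integrals are `0`.
  by_cases hB : B = ⊤
  · have hA : A = ⊤ := by
      rw [hB, ENNReal.mul_top (by positivity)] at hBA
      exact top_le_iff.mp hBA
    simp [hA, hB]
  · exact ENNReal.toReal_mono hB hAB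

/-- (Laplace smoothing `L1` certificate of
Lecuyer et al.) If the class `i` of the Laplace-smoothed classifier at `v`
satisfies `E[hᵢ(v+ε)] ≥ e^{2√2·ρ/σ}·E[h_{i'}(v+ε)]` for every `i' ≠ i`, then
for every `ṽ` with `‖v - ṽ‖₁ ≤ ρ`, class `i` still has the greatest
smoothed score at `ṽ`. -/
theorem laplace_smoothing_l1_certificate {d k : ℕ} (σ ρ : ℝ) (hσ : 0 < σ)
    (h : (Fin d → ℝ) → Fin k → ℝ) (hmeas : Measurable h)
    (hrange : ∀ w i', h w i' ∈ Set.Icc (0 : ℝ) 1)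
    (v : Fin d → ℝ) (i : Fin k)
    (hgap : ∀ i', i' ≠ i →
      Real.exp (2 * Real.sqrt 2 * ρ / σ) * (∫ ε, h (v + ε) i' ∂(laplacePi d σ))
        ≤ ∫ ε, h (v + ε) i ∂(laplacePi d σ))
    (vt : Fin d → ℝ) (hnear : (∑ j, |v j - vt j|) ≤ ρ) :
    ∀ i', i' ≠ i →
      (∫ ε, h (vt + ε) i' ∂(laplacePi d σ)) ≤ ∫ ε, h (vt + ε) i ∂(laplacePi d σ) := by
  intro i' hi'
  set E := fun w j ↦ ∫ ε, h (w + ε) j ∂(laplacePi d σ)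
  have hE_nonneg w j : 0 ≤ E w j := integral_nonneg fun _ ↦ (hrange _ _).1
  have hshift w w' j : exp (-(√2 * ∑ l, |w l - w' l|) / σ) * E w' j ≤ E w j := by
    have hcancel (x : Fin d → ℝ) : w' + (w - w' + x) = w + x := by abel
    simpa [E, hcancel] using exp_mul_integral_laplacePi_le hσ (w - w')
      (g := fun x ↦ h (w' + x) j) (by fun_prop) fun x ↦ (hrange _ _).1
  set K := exp (-(√2 * ∑ l, |v l - vt l|) / σ)
  set B := exp (2 * √2 * ρ / σ)
  have hKBK : 1 ≤ K * B * K := by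
    rw [← exp_add, ← exp_add, one_le_exp_iff]
    have hmargin : 0 ≤ 2 * √2 * (ρ - ∑ l, |v l - vt l|) / σ := by
      have := sub_nonneg.mpr hnear; positivity
    convert hmargin using 1; ring
  calc E vt i' ≤ K * B * K * E vt i' := le_mul_of_one_le_left (hE_nonneg _ _) hKBK
    _ = K * (B * (K * E vt i')) := by ring
    _ ≤ K * (B * E v i') := by gcongr; exact hshift v vt i'
    _ ≤ K * E v i := by gcongr; exact hgap i' hi'
    _ ≤ E vt i := by simpa [abs_sub_comm] using hshift vt v i
end
end

section
/- Let x be an image on an n×m grid and let P = {a+1,…,a+k} × {b+1,…,b+k} be a k×k patch lying strictly in the interior of the grid (i.e., 1 ≤ a, a+k ≤ n−1, 1 ≤ b, b+k ≤ m−1). Let δ be a random local flow plan whose entries are independent, each with mean 0 and variance σ². Then the aggregate intensity of the patch after applying the flow, Σ_{(i,j)∈P} Δ(x, δ)_{i,j}, equals Σ_{(i,j)∈P} x_{i,j} plus a signed sum of exactly 4k distinct entries of δ (those on edges crossing the boundary of P), and hence its variance equals 4k·σ². In particular, under Wasserstein (flow-domain) smoothing the variance of the patch-aggregate feature is proportional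 to the perimeter of the patch rather than its area. -/
noncomputable section

open Finset MeasureTheory

/-- The two pixels joined by a flow-plan coordinate (an edge of the grid). -/
def edgeEnds {n m : ℕ} : FlowIdx n m → Pos n m × Pos n m
  | Sum.inl (i, j) => ((vlow i, j), (vhigh i, j))
  | Sum.inr (i, j) => ((i, hlow j), (i, hhigh j))

/-- The `k × k` patch `{a+1,…,a+k} × {b+1,…,b+k}` (one-based indexing), i.e.
`{a,…,a+k-1} × {b,…,b+k-1}` in zero-based indexing. -/
def patchF (n m a b k : ℕ) : Finset (Pos n m) :=
  Finset.univ.filter fun p =>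
    a ≤ (p.1 : ℕ) ∧ (p.1 : ℕ) < a + k ∧ b ≤ (p.2 : ℕ) ∧ (p.2 : ℕ) < b + k

/-- An edge crosses the boundary of the patch if exactly one of its two
adjacent pixels lies in the patch. -/
def crossesBoundary (n m a b k : ℕ) (e : FlowIdx n m) : Prop :=
  ((edgeEnds e).1 ∈ patchF n m a b k ∧ (edgeEnds e).2 ∉ patchF n m a b k) ∨
    ((edgeEnds e).1 ∉ patchF n m a b k ∧ (edgeEnds e).2 ∈ patchF n m a b k)

instance (n m a b k : ℕ) : DecidablePred (crossesBoundary n m a b k) := fun e =>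
  by unfold crossesBoundary; infer_instance

/-!
Summing `Δ(x, δ)` over any set `P` of pixels is a discrete divergence theorem: the flow on an
edge leaves one endpoint and enters the other, so it cancels when both endpoints lie in `P` and
survives with sign `±1` exactly when the edge crosses the boundary of `P`. For a `k × k` patch
away from the border of the grid there are `4k` crossing edges (`k` on each side), and
independence turns the variance of the signed sum of their flows into `4k · σ²`.
-/

/- The inner double sum is `padV`/`padH` evaluated at `(u p, v p)`; `e i j` is the unique pixel
that reads the entry `(i, j)` this way. -/
theorem sum_sum_sum_ite_coe_eq_sum_sum_ite_mem {α : Type*} [DecidableEq α] {N M : ℕ}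
    (P : Finset α) (f : Fin N → Fin M → ℝ) (u v : α → ℤ) (e : Fin N → Fin M → α)
    (he : ∀ p (i : Fin N) (j : Fin M),
      ((i : ℕ) : ℤ) = u p ∧ ((j : ℕ) : ℤ) = v p ↔ p = e i j) :
    ∑ p ∈ P, ∑ i : Fin N, ∑ j : Fin M,
        (if ((i : ℕ) : ℤ) = u p ∧ ((j : ℕ) : ℤ) = v p then f i j else 0) =
      ∑ i : Fin N, ∑ j : Fin M, if e i j ∈ P then f i j else 0 := by
  rw [sum_comm]
  refine sum_congr rfl fun i _ => ?_
  rw [sum_comm]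
  refine sum_congr rfl fun j _ => ?_
  simp_rw [he]
  exact sum_ite_eq' P _ _

theorem card_filter_val_mem {N : ℕ} (S : Finset ℕ) (hS : ∀ t ∈ S, t < N) :
    #(univ.filter fun i : Fin N => (i : ℕ) ∈ S) = #S := by
  rw [← S.card_attachFin hS]
  congr 1
  ext i
  simp [mem_attachFin]

theorem card_filter_eq_card_mul_card {N M : ℕ} (S T : Finset ℕ) (hS : ∀ t ∈ S, t < N)
    (hT : ∀ t ∈ T, t < M) (p : Fin N × Fin M → Prop) [DecidablePred p]
    (hp : ∀ q, p q ↔ (q.1 : ℕ) ∈ S ∧ (q.2 : ℕ) ∈ T) :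
    #(univ.filter p) = #S * #T := by
  rw [filter_congr fun q _ => hp q, ← univ_product_univ,
    filter_product (fun i : Fin N => (i : ℕ) ∈ S) (fun j : Fin M => (j : ℕ) ∈ T), card_product,
    card_filter_val_mem S hS, card_filter_val_mem T hT]

open ProbabilityTheory in
theorem variance_sum_mul_of_iIndepFun {Ω ι : Type*} [MeasurableSpace Ω] {μ : Measure Ω}
    [Fintype ι] {X : ι → Ω → ℝ} (hindep : iIndepFun X μ) (hX : ∀ i, MemLp (X i) 2 μ)
    (c : ι → ℝ) :
    Var[fun ω => ∑ i, c i * X i ω; μ] = ∑ i, c i ^ 2 * Var[X i; μ] := by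
  have hsum : (fun ω => ∑ i, c i * X i ω) = ∑ i, fun ω => c i * X i ω := by
    ext ω
    simp only [Finset.sum_apply]
  rw [hsum, IndepFun.variance_sum (fun i _ => (hX i).const_mul (c i))
    fun i _ j _ hij => (hindep.indepFun hij).comp (measurable_const_mul _) (measurable_const_mul _)]
  simp only [variance_const_mul]

def boundarySign {n m : ℕ} (P : Finset (Pos n m)) (e : FlowIdx n m) : ℝ :=
  (if (edgeEnds e).2 ∈ P then 1 else 0) - (if (edgeEnds e).1 ∈ P then 1 else 0)

theorem boundarySign_inl {n m : ℕ} (P : Finset (Pos n m)) (i : Fin (n - 1)) (j : Fin m) :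
    boundarySign P (.inl (i, j)) =
      (if (vhigh i, j) ∈ P then 1 else 0) - (if (vlow i, j) ∈ P then 1 else 0) :=
  rfl

theorem boundarySign_inr {n m : ℕ} (P : Finset (Pos n m)) (i : Fin n) (j : Fin (m - 1)) :
    boundarySign P (.inr (i, j)) =
      (if (i, hhigh j) ∈ P then 1 else 0) - (if (i, hlow j) ∈ P then 1 else 0) :=
  rfl

theorem sum_applyFlow {n m : ℕ} (P : Finset (Pos n m)) (x : Fin n → Fin m → ℝ)
    (δ : FlowIdx n m → ℝ) :
    ∑ p ∈ P, applyFlow x (vPart δ) (hPart δ) p.1 p.2 =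
      ∑ p ∈ P, x p.1 p.2 + ∑ e, boundarySign P e * δ e := by
  have vIn := sum_sum_sum_ite_coe_eq_sum_sum_ite_mem P (vPart δ) (fun p => (p.1 : ℕ) - 1)
    (fun p => (p.2 : ℕ)) (fun i j => (vhigh i, j))
    (fun p i j => by simp only [Prod.ext_iff, Fin.ext_iff, vhigh]; omega)
  have vOut := sum_sum_sum_ite_coe_eq_sum_sum_ite_mem P (vPart δ) (fun p => (p.1 : ℕ))
    (fun p => (p.2 : ℕ)) (fun i j => (vlow i, j))
    (fun p i j => by simp only [Prod.ext_iff, Fin.ext_iff, vlow]; omega)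
  have hIn := sum_sum_sum_ite_coe_eq_sum_sum_ite_mem P (hPart δ) (fun p => (p.1 : ℕ))
    (fun p => (p.2 : ℕ) - 1) (fun i j => (i, hhigh j))
    (fun p i j => by simp only [Prod.ext_iff, Fin.ext_iff, hhigh]; omega)
  have hOut := sum_sum_sum_ite_coe_eq_sum_sum_ite_mem P (hPart δ) (fun p => (p.1 : ℕ))
    (fun p => (p.2 : ℕ)) (fun i j => (i, hlow j))
    (fun p i j => by simp only [Prod.ext_iff, Fin.ext_iff, hlow]; omega)
  simp only [applyFlow, padV, padH, sum_add_distrib, sum_sub_distrib, vIn, vOut, hIn, hOut]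
  simp only [Fintype.sum_sum_type, Fintype.sum_prod_type, boundarySign_inl, boundarySign_inr,
    sub_mul, boole_mul, sum_sub_distrib, vPart, hPart]
  ring

section Patch

variable {n m a b k : ℕ}

theorem mem_patchF {p : Pos n m} :
    p ∈ patchF n m a b k ↔
      a ≤ (p.1 : ℕ) ∧ (p.1 : ℕ) < a + k ∧ b ≤ (p.2 : ℕ) ∧ (p.2 : ℕ) < b + k := by
  simp [patchF]

theorem boundarySign_eq_one_or_neg_one {e : FlowIdx n m} (he : crossesBoundary n m a b k e) :
    boundarySign (patchF n m a b k) e = 1 ∨ boundarySign (patchF n m a b k) e = -1 := by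
  rcases he with ⟨h₁, h₂⟩ | ⟨h₁, h₂⟩ <;> simp [boundarySign, h₁, h₂]

theorem boundarySign_eq_zero {e : FlowIdx n m} (he : ¬crossesBoundary n m a b k e) :
    boundarySign (patchF n m a b k) e = 0 := by
  unfold crossesBoundary at he
  by_cases h₁ : (edgeEnds e).1 ∈ patchF n m a b k <;>
    by_cases h₂ : (edgeEnds e).2 ∈ patchF n m a b k <;> simp_all [boundarySign]

theorem boundarySign_sq (e : FlowIdx n m) :
    boundarySign (patchF n m a b k) e ^ 2 = if crossesBoundary n m a b k e then 1 else 0 := by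
  split_ifs with he
  · rcases boundarySign_eq_one_or_neg_one he with h | h <;> simp [h]
  · simp [boundarySign_eq_zero he]

theorem crossesBoundary_inl_iff (ha₁ : 1 ≤ a) (q : Fin (n - 1) × Fin m) :
    crossesBoundary n m a b k (.inl q) ↔
      (q.1 : ℕ) ∈ ({a - 1, a + k - 1} : Finset ℕ) ∧ (q.2 : ℕ) ∈ Ico b (b + k) := by
  have := q.1.isLt
  simp only [crossesBoundary, edgeEnds, mem_patchF, vlow, vhigh, mem_insert, mem_singleton,
    mem_Ico]
  omega

theorem crossesBoundary_inr_iff (hb₁ : 1 ≤ b) (q : Fin n × Fin (m - 1)) :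
    crossesBoundary n m a b k (.inr q) ↔
      (q.1 : ℕ) ∈ Ico a (a + k) ∧ (q.2 : ℕ) ∈ ({b - 1, b + k - 1} : Finset ℕ) := by
  have := q.2.isLt
  simp only [crossesBoundary, edgeEnds, mem_patchF, hlow, hhigh, mem_insert, mem_singleton,
    mem_Ico]
  omega

theorem card_filter_crossesBoundary (hk : 0 < k) (ha₁ : 1 ≤ a) (ha₂ : a + k ≤ n - 1)
    (hb₁ : 1 ≤ b) (hb₂ : b + k ≤ m - 1) :
    #(univ.filter (crossesBoundary n m a b k)) = 4 * k := by
  have hpair : ∀ c, 1 ≤ c → #({c - 1, c + k - 1} : Finset ℕ) = 2 := fun c hc =>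
    card_pair (by omega)
  have hV := card_filter_eq_card_mul_card (N := n - 1) (M := m)
    {a - 1, a + k - 1} (Ico b (b + k))
    (fun t ht => by simp only [mem_insert, mem_singleton] at ht; omega)
    (fun t ht => by simp only [mem_Ico] at ht; omega)
    _ (crossesBoundary_inl_iff (b := b) (k := k) ha₁)
  have hH := card_filter_eq_card_mul_card (N := n) (M := m - 1)
    (Ico a (a + k)) {b - 1, b + k - 1}
    (fun t ht => by simp only [mem_Ico] at ht; omega)
    (fun t ht => by simp only [mem_insert, mem_singleton] at ht; omega)
    _ (crossesBoundary_inr_iff (a := a) (k := k) hb₁)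
  rw [card_filter, Fintype.sum_sum_type, ← card_filter, ← card_filter, hV, hH, hpair a ha₁,
    hpair b hb₁, Nat.card_Ico, Nat.card_Ico]
  omega

end Patch

open ProbabilityTheory in
theorem patch_aggregate_variance_general {n m k a b : ℕ} (σ : ℝ)
    (x : Fin n → Fin m → ℝ) (hk : 0 < k)
    (ha1 : 1 ≤ a) (ha2 : a + k ≤ n - 1) (hb1 : 1 ≤ b) (hb2 : b + k ≤ m - 1)
    {Ω : Type} [MeasurableSpace Ω] (μ : Measure Ω) [IsProbabilityMeasure μ]
    (δ : Ω → FlowIdx n m → ℝ)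
    (hindep : iIndepFun (fun e ω => δ ω e) μ)
    (hL2 : ∀ e, MemLp (fun ω => δ ω e) 2 μ)
    (hvar : ∀ e, variance (fun ω => δ ω e) μ = σ ^ 2) :
    (∃ s : FlowIdx n m → ℝ,
      (∀ e, crossesBoundary n m a b k e → s e = 1 ∨ s e = -1) ∧
      (∀ e, ¬crossesBoundary n m a b k e → s e = 0) ∧
      (Finset.univ.filter (crossesBoundary n m a b k)).card = 4 * k ∧
      ∀ δ' : FlowIdx n m → ℝ,
        (∑ p ∈ patchF n m a b k, applyFlow x (vPart δ') (hPart δ') p.1 p.2) =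
          (∑ p ∈ patchF n m a b k, x p.1 p.2) + ∑ e, s e * δ' e) ∧
    variance
        (fun ω => ∑ p ∈ patchF n m a b k,
          applyFlow x (vPart (δ ω)) (hPart (δ ω)) p.1 p.2) μ
      = 4 * (k : ℝ) * σ ^ 2 := by
  have hcard := card_filter_crossesBoundary hk ha1 ha2 hb1 hb2
  refine ⟨⟨boundarySign (patchF n m a b k), fun _ => boundarySign_eq_one_or_neg_one,
    fun _ => boundarySign_eq_zero, hcard, sum_applyFlow _ x⟩, ?_⟩
  have hsum_meas : AEStronglyMeasurable
      (fun ω => ∑ e, boundarySign (patchF n m a b k) e * δ ω e) μ :=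
    Finset.aestronglyMeasurable_fun_sum _ fun e _ => (hL2 e).aestronglyMeasurable.const_mul _
  simp_rw [sum_applyFlow _ x]
  rw [variance_const_add hsum_meas, variance_sum_mul_of_iIndepFun hindep hL2]
  simp_rw [hvar, ← sum_mul, boundarySign_sq, sum_boole, hcard]
  push_cast
  ring

open ProbabilityTheory in
/-- For a `k × k` patch `P` strictly in the interior of the
grid and a random local flow plan `δ` with independent mean-zero,
variance-`σ²` entries: the aggregate patch intensity after applying the flow
equals the aggregate intensity of `x` on `P` plus a signed sum of exactly
`4k` distinct entries of `δ` (those on edges crossing the boundary of `P`),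
and hence its variance is `4k·σ²` — proportional to the perimeter of the
patch rather than its area. -/
theorem patch_aggregate_variance {n m k a b : ℕ} (σ : ℝ)
    (x : Fin n → Fin m → ℝ) (hk : 0 < k)
    (ha1 : 1 ≤ a) (ha2 : a + k ≤ n - 1) (hb1 : 1 ≤ b) (hb2 : b + k ≤ m - 1)
    {Ω : Type} [MeasurableSpace Ω] (μ : Measure Ω) [IsProbabilityMeasure μ]
    (δ : Ω → FlowIdx n m → ℝ)
    (hmeas : ∀ e, Measurable fun ω => δ ω e)
    (hindep : iIndepFun (fun e ω => δ ω e) μ)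
    (hL2 : ∀ e, MemLp (fun ω => δ ω e) 2 μ)
    (hmean : ∀ e, (∫ ω, δ ω e ∂μ) = 0)
    (hvar : ∀ e, variance (fun ω => δ ω e) μ = σ ^ 2) :
    (∃ s : FlowIdx n m → ℝ,
      (∀ e, crossesBoundary n m a b k e → s e = 1 ∨ s e = -1) ∧
      (∀ e, ¬crossesBoundary n m a b k e → s e = 0) ∧
      (Finset.univ.filter (crossesBoundary n m a b k)).card = 4 * k ∧
      ∀ δ' : FlowIdx n m → ℝ,
        (∑ p ∈ patchF n m a b k, applyFlow x (vPart δ') (hPart δ') p.1 p.2) =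
          (∑ p ∈ patchF n m a b k, x p.1 p.2) + ∑ e, s e * δ' e) ∧
    variance
        (fun ω => ∑ p ∈ patchF n m a b k,
          applyFlow x (vPart (δ ω)) (hPart (δ ω)) p.1 p.2) μ
      = 4 * (k : ℝ) * σ ^ 2 :=
  patch_aggregate_variance_general σ x hk ha1 ha2 hb1 hb2 μ δ hindep hL2 hvar
end
end
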